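/- arXiv:1411.0339 — 4 statements merged into one kernel-verified Lean document; each statement's English description precedes it below -/
import Mathlib

section
/- Let r ≥ 3 be odd. For all integers a and b with 1 ≤ a ≤ r+1 and 1 ≤ b ≤ r−1, the integer (r+1)(b−1) + a belongs to P_{r,r+2} if and only if (r+1)(r−1−b) + a does not belong to P_{r,r+2}. -/
/-- A partition: a weakly decreasing sequence of natural numbers (indexed from 0)
that is eventually zero.  `parts i` is the (i+1)-st largest part (0 if `i` exceeds
the number of parts). -/
structure NPartition where
  parts : ℕ → ℕ
  antitone : ∀ ⦃i j : ℕ⦄, i ≤ j → parts j ≤ parts i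
  eventually_zero : ∃ N, ∀ i, N ≤ i → parts i = 0

namespace NPartition

/-- The size of a partition: the sum of its parts. -/
noncomputable def size (lam : NPartition) : ℕ := ∑ᶠ i, lam.parts i

/-- The number of (positive) parts of a partition. -/
noncomputable def numParts (lam : NPartition) : ℕ := sInf {N | lam.parts N = 0}

/-- The conjugate partition: `conj.parts j` is the number of rows whose part exceeds `j`,
i.e. the length of column `j` of the Young diagram. -/
noncomputable def conj (lam : NPartition) : NPartition where
  parts := fun j => ((Finset.range lam.numParts).filter (fun i => j < lam.parts i)).card
  antitone := by
    intro a b hab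
    apply Finset.card_le_card
    intro x hx
    simp only [Finset.mem_filter] at hx ⊢
    exact ⟨hx.1, lt_of_le_of_lt hab hx.2⟩
  eventually_zero := by
    refine ⟨lam.parts 0, fun j hj => ?_⟩
    simp only [Finset.card_eq_zero, Finset.filter_eq_empty_iff]
    intro i _
    exact not_lt.mpr (le_trans (lam.antitone (Nat.zero_le i)) hj)

/-- The hook length of the box in row `i`, column `j` (both 0-indexed) of the Young
diagram: arm + leg + 1. -/
noncomputable def hookLength (lam : NPartition) (i j : ℕ) : ℕ :=
  (lam.parts i - (j + 1)) + (lam.conj.parts j - (i + 1)) + 1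

/-- `lam` is an `s`-core: no box of its Young diagram has hook length `s`. -/
noncomputable def IsCore (s : ℕ) (lam : NPartition) : Prop :=
  ∀ i j, j < lam.parts i → lam.hookLength i j ≠ s

/-- The empty partition. -/
def emptyP : NPartition := ⟨fun _ => 0, fun _ _ _ => le_rfl, ⟨0, fun _ _ => rfl⟩⟩

/-- The parts of the partition obtained from `lam` by removing the (rim) hook with
corner box `(i, j)` (0-indexed). -/
noncomputable def removeHookParts (lam : NPartition) (i j : ℕ) : ℕ → ℕ := fun r =>
  if r < i then lam.parts r
  else if r + 1 < lam.conj.parts j then lam.parts (r + 1) - 1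
  else if r + 1 = lam.conj.parts j then j
  else lam.parts r

/-- `mu` is obtained from `lam` by removing a single hook of length `s`. -/
noncomputable def RemoveHookStep (s : ℕ) (lam mu : NPartition) : Prop :=
  ∃ i j, j < lam.parts i ∧ lam.hookLength i j = s ∧
    ∀ r, mu.parts r = lam.removeHookParts i j r

/-- `core` is the `s`-core of `lam`: it is obtained from `lam` by repeatedly removing
hooks of length `s`, and no hook of length `s` remains. -/
noncomputable def HasSCore (s : ℕ) (lam core : NPartition) : Prop :=
  Relation.ReflTransGen (RemoveHookStep s) lam core ∧ IsCore s core

/-- The bead-set of `lam` with shift `k`: the set `{0, …, k-1} ∪ {h + k : h a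
first-column hook length of `lam`}`.  (The first-column hook length of row `i`
(0-indexed) is `parts i + (m - (i+1))` where `m` is the number of parts.) -/
noncomputable def beadSet (lam : NPartition) (k : ℕ) : Finset ℕ :=
  Finset.range k ∪ (Finset.range lam.numParts).image
    (fun i => lam.parts i + (lam.numParts - (i + 1)) + k)

/-- `X` is a bead-set for `lam`. -/
noncomputable def IsBeadSet (lam : NPartition) (X : Finset ℕ) : Prop :=
  ∃ k, X = lam.beadSet k

/-- The minimal bead-set of `lam` (shift `k = 0`), i.e. its set of first-column
hook lengths. -/
noncomputable def minBeadSet (lam : NPartition) : Finset ℕ := lam.beadSet 0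

/-- `X` is the bead-set of `lam` normalized with respect to `s`: the size of `X`
is divisible by `s`, with the least possible shift `k`. -/
noncomputable def IsNormalizedBeadSet (s : ℕ) (lam : NPartition) (X : Finset ℕ) : Prop :=
  ∃ k, X = lam.beadSet k ∧ (lam.beadSet k).card % s = 0 ∧
    ∀ k' < k, (lam.beadSet k').card % s ≠ 0

end NPartition

/-- Runner `i` of the `s`-abacus of the bead-set `X`:  `X_i = {j : i + j·s ∈ X}`. -/
def runner (s i : ℕ) (X : Finset ℕ) : Finset ℕ :=
  (Finset.range (X.sup id + 1)).filter (fun j => i + j * s ∈ X)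

/-- The staircase partition `τ_ℓ = (ℓ, ℓ-1, …, 1)`. -/
def staircase (l : ℕ) : NPartition :=
  ⟨fun i => l - i, fun _ _ hij => Nat.sub_le_sub_left hij l,
   ⟨l, fun i hi => Nat.sub_eq_zero_of_le hi⟩⟩

/-- `P_{s,t}`: the set of positive integers not expressible as a nonnegative integer
combination of `s` and `t`. -/
def Pst (s t : ℕ) : Set ℕ := {n | 0 < n ∧ ¬ ∃ a b : ℕ, n = a * s + b * t}


lemma key_rep (r a b : ℕ) (hr : 3 ≤ r) (hro : r % 2 = 1)
    (ha1 : 1 ≤ a) (ha2 : a ≤ r + 1) (hb1 : 1 ≤ b) (hb2 : b ≤ r - 1) :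
    (∃ x y : ℕ, (r + 1) * (b - 1) + a = x * r + y * (r + 2)) ↔
      ¬ (((a + b) % 2 = 1 ∧ b < a) ∨ ((a + b) % 2 = 0 ∧ a + b ≤ r)) := by
  obtain ⟨k, rfl⟩ : ∃ k, b = k + 1 := ⟨b - 1, by omega⟩
  simp only [Nat.add_sub_cancel]
  constructor
  · rintro ⟨x, y, hxy⟩ hC
    have h : ((r : ℤ) + 1) * k + a = x * r + y * (r + 2) := by exact_mod_cast hxy
    set m : ℤ := (x : ℤ) + y - k with hmdef
    obtain ⟨w, hw⟩ : ∃ w : ℤ, w = m * r := ⟨_, rfl⟩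
    have hm : w = (a : ℤ) + k - 2 * y := by rw [hw]; linear_combination -h
    have hx0 : (0:ℤ) ≤ x := Int.natCast_nonneg x
    have hy0 : (0:ℤ) ≤ y := Int.natCast_nonneg y
    have hk0 : (0:ℤ) ≤ k := Int.natCast_nonneg k
    have hr0 : (0:ℤ) ≤ r := Int.natCast_nonneg r
    rcases hC with ⟨hpar, hab⟩ | ⟨hpar, hab⟩
    · -- a + k even, k + 1 < a
      have hmev : m % 2 = 0 := by
        have hwmod : w % 2 = 0 := by omega
        have hwev : Even w := Int.even_iff.mpr hwmod
        rcases Int.even_mul.mp (hw ▸ hwev) with he | he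
        · exact Int.even_iff.mp he
        · exfalso; have := Int.even_iff.mp he; omega
      have htri : m = 0 ∨ 2 ≤ m ∨ m ≤ -2 := by omega
      rcases htri with h0 | h2 | h2
      · have hw0 : w = 0 := by rw [hw, h0]; ring
        omega
      · have : 2 * (r:ℤ) ≤ w := by
          rw [hw]; exact mul_le_mul_of_nonneg_right h2 hr0
        omega
      · have : w ≤ -2 * (r:ℤ) := by
          rw [hw]; exact mul_le_mul_of_nonneg_right h2 hr0
        omega
    · -- a + k odd, a + k + 1 ≤ r
      have hmodd : m % 2 = 1 ∨ m % 2 = -1 := by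
        by_contra hcon
        have hmev : m % 2 = 0 := by omega
        have : Even w := by
          rw [hw]
          exact (Int.even_mul).mpr (Or.inl (Int.even_iff.mpr hmev))
        have := Int.even_iff.mp this
        omega
      have htri : 1 ≤ m ∨ m ≤ -1 := by omega
      rcases htri with h2 | h2
      · have : 1 * (r:ℤ) ≤ w := by
          rw [hw]; exact mul_le_mul_of_nonneg_right h2 hr0
        omega
      · have : w ≤ -1 * (r:ℤ) := by
          rw [hw]; exact mul_le_mul_of_nonneg_right h2 hr0
        omega
  · intro hC
    push_neg at hC
    by_cases hp : (a + k) % 2 = 0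
    · have ha' : a ≤ k + 1 := hC.1 (by omega)
      obtain ⟨y, hy⟩ : ∃ y, a + k = 2 * y := ⟨(a + k) / 2, by omega⟩
      obtain ⟨x, hx⟩ : ∃ x, y + x = k := ⟨k - y, by omega⟩
      refine ⟨x, y, ?_⟩
      have hx' : (y : ℤ) + x = k := by exact_mod_cast hx
      have hy' : (a : ℤ) + k = 2 * y := by exact_mod_cast hy
      have : ((r : ℤ) + 1) * k + a = x * r + y * (r + 2) := by
        linear_combination (-(r:ℤ)) * hx' + hy'
      exact_mod_cast this
    · have ha' : r < a + (k + 1) := hC.2 (by omega)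
      obtain ⟨y, hy⟩ : ∃ y, a + k = 2 * y + r := ⟨(a + k - r) / 2, by omega⟩
      obtain ⟨x, hx⟩ : ∃ x, y + x = k + 1 := ⟨k + 1 - y, by omega⟩
      refine ⟨x, y, ?_⟩
      have hx' : (y : ℤ) + x = k + 1 := by exact_mod_cast hx
      have hy' : (a : ℤ) + k = 2 * y + r := by exact_mod_cast hy
      have : ((r : ℤ) + 1) * k + a = x * r + y * (r + 2) := by
        linear_combination (-(r:ℤ)) * hx' + hy'
      exact_mod_cast this

lemma key_mem (r a b : ℕ) (hr : 3 ≤ r) (hro : r % 2 = 1)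
    (ha1 : 1 ≤ a) (ha2 : a ≤ r + 1) (hb1 : 1 ≤ b) (hb2 : b ≤ r - 1) :
    ((r + 1) * (b - 1) + a ∈ Pst r (r + 2)) ↔
      (((a + b) % 2 = 1 ∧ b < a) ∨ ((a + b) % 2 = 0 ∧ a + b ≤ r)) := by
  have hpos : 0 < (r + 1) * (b - 1) + a :=
    Nat.lt_of_lt_of_le ha1 (Nat.le_add_left a _)
  have hkr := key_rep r a b hr hro ha1 ha2 hb1 hb2
  constructor
  · rintro ⟨-, hnr⟩
    by_contra hC
    exact hnr (hkr.mpr hC)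
  · intro hC
    exact ⟨hpos, fun hrep => (hkr.mp hrep) hC⟩

/-- Let `r ≥ 3` be odd.  For all integers `a, b` with `1 ≤ a ≤ r+1` and
`1 ≤ b ≤ r-1`, `(r+1)(b-1) + a ∈ P_{r,r+2}` iff `(r+1)(r-1-b) + a ∉ P_{r,r+2}`. -/
theorem amdeberhan_leven_symmetry (r : ℕ) (hr : 3 ≤ r) (hodd : Odd r) :
    ∀ a b : ℕ, 1 ≤ a → a ≤ r + 1 → 1 ≤ b → b ≤ r - 1 →
      ((r + 1) * (b - 1) + a ∈ Pst r (r + 2) ↔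
        (r + 1) * (r - 1 - b) + a ∉ Pst r (r + 2)) := by
  intro a b ha1 ha2 hb1 hb2
  have hro : r % 2 = 1 := Nat.odd_iff.mp hodd
  have h1 := key_mem r a b hr hro ha1 ha2 hb1 hb2
  have heq : r - 1 - b = (r - b) - 1 := by omega
  have h2 := key_mem r a (r - b) hr hro ha1 ha2 (by omega) (by omega)
  rw [h1, heq, h2]
  omega
end

section
/- Let X be the minimal bead-set of a nonempty partition λ and let x′ = max X. Then λ is self-conjugate (λ = λ*) if and only if for every integer y with 0 ≤ y ≤ x′, y ∈ X exactly when x′ − y ∉ X. -/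
namespace NPartition

theorem ext_parts {lam mu : NPartition} (h : lam.parts = mu.parts) : lam = mu := by
  cases lam; cases mu; simp_all

variable (lam : NPartition)

theorem parts_eq_zero_of_numParts_le {i : ℕ} (hi : lam.numParts ≤ i) :
    lam.parts i = 0 := by
  obtain ⟨N, hN⟩ := lam.eventually_zero
  have hmem : lam.parts lam.numParts = 0 :=
    Nat.sInf_mem (⟨N, hN N le_rfl⟩ : {N | lam.parts N = 0}.Nonempty)
  exact Nat.le_antisymm (hmem ▸ lam.antitone hi) (Nat.zero_le _)

theorem parts_pos_of_lt_numParts {i : ℕ} (hi : i < lam.numParts) :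
    0 < lam.parts i := by
  rcases Nat.eq_zero_or_pos (lam.parts i) with h | h
  · exact absurd (Nat.sInf_le (show i ∈ {N | lam.parts N = 0} from h)) (not_le.2 hi)
  · exact h

theorem conj_parts_le (j : ℕ) : lam.conj.parts j ≤ lam.numParts := by
  have := Finset.card_filter_le (Finset.range lam.numParts) (fun i => j < lam.parts i)
  simpa [conj] using this

theorem lt_conj_parts_iff {i j : ℕ} : i < lam.conj.parts j ↔ j < lam.parts i := by
  show i < ((Finset.range lam.numParts).filter (fun i => j < lam.parts i)).card ↔ _
  constructor
  · intro h
    by_contra hle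
    push_neg at hle
    have hsub : (Finset.range lam.numParts).filter (fun k => j < lam.parts k)
        ⊆ Finset.range i := by
      intro k hk
      simp only [Finset.mem_filter, Finset.mem_range] at hk ⊢
      by_contra hki
      push_neg at hki
      exact absurd (lt_of_lt_of_le hk.2 (le_trans (lam.antitone hki) hle)) (lt_irrefl j)
    have := Finset.card_le_card hsub
    simp only [Finset.card_range] at this
    omega
  · intro h
    have hsub : Finset.range (i + 1)
        ⊆ (Finset.range lam.numParts).filter (fun k => j < lam.parts k) := by
      intro k hk
      simp only [Finset.mem_range] at hk
      have hk' : k ≤ i := by omega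
      have hjk : j < lam.parts k := lt_of_lt_of_le h (lam.antitone hk')
      have hkm : k < lam.numParts := by
        by_contra hkm
        push_neg at hkm
        rw [lam.parts_eq_zero_of_numParts_le hkm] at hjk
        omega
      simp only [Finset.mem_filter, Finset.mem_range]
      exact ⟨hkm, hjk⟩
    have := Finset.card_le_card hsub
    simp only [Finset.card_range] at this
    omega

theorem conj_parts_eq_zero {j : ℕ} (hj : lam.parts 0 ≤ j) : lam.conj.parts j = 0 := by
  by_contra h
  have : 0 < lam.conj.parts j := Nat.pos_of_ne_zero h
  have := lam.lt_conj_parts_iff.1 this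
  omega

theorem conj_parts_pos {j : ℕ} (hj : j < lam.parts 0) : 0 < lam.conj.parts j :=
  lam.lt_conj_parts_iff.2 hj

theorem conj_numParts (hlam : lam.parts 0 ≠ 0) : lam.conj.numParts = lam.parts 0 := by
  apply le_antisymm
  · exact Nat.sInf_le (show lam.parts 0 ∈ {N | lam.conj.parts N = 0} from
      lam.conj_parts_eq_zero le_rfl)
  · apply le_csInf (⟨lam.parts 0, lam.conj_parts_eq_zero le_rfl⟩ :
      {N | lam.conj.parts N = 0}.Nonempty)
    intro b hb
    by_contra hbl
    push_neg at hbl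
    have := lam.conj_parts_pos hbl
    simp only [Set.mem_setOf_eq] at hb
    omega

theorem minBeadSet_eq_image : lam.minBeadSet
    = (Finset.range lam.numParts).image
      (fun i => lam.parts i + (lam.numParts - (i + 1))) := by
  simp [minBeadSet, beadSet]

theorem beta_strictAnti ⦃i j : ℕ⦄ (hij : i < j) (hj : j < lam.numParts) :
    lam.parts j + (lam.numParts - (j + 1)) < lam.parts i + (lam.numParts - (i + 1)) := by
  have := lam.antitone hij.le
  omega

theorem card_minBeadSet : lam.minBeadSet.card = lam.numParts := by
  rw [lam.minBeadSet_eq_image, Finset.card_image_of_injOn, Finset.card_range]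
  intro a ha b hb hab
  simp only [Finset.coe_range, Set.mem_Iio] at ha hb
  by_contra hne
  rcases lt_or_gt_of_ne hne with h' | h'
  · exact absurd hab (lam.beta_strictAnti h' hb).ne'
  · exact absurd hab (lam.beta_strictAnti h' ha).ne

theorem sup_minBeadSet (hlam : lam.parts 0 ≠ 0) :
    lam.minBeadSet.sup id = lam.parts 0 + (lam.numParts - 1) := by
  have hm : 0 < lam.numParts := by
    by_contra h
    push_neg at h
    exact hlam (lam.parts_eq_zero_of_numParts_le (by omega))
  apply le_antisymm
  · apply Finset.sup_le
    intro b hb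
    rw [lam.minBeadSet_eq_image] at hb
    simp only [Finset.mem_image, Finset.mem_range] at hb
    obtain ⟨i, hi, rfl⟩ := hb
    have := lam.antitone (Nat.zero_le i)
    simp only [id]
    omega
  · apply Finset.le_sup (f := id)
    rw [lam.minBeadSet_eq_image]
    simp only [Finset.mem_image, Finset.mem_range]
    exact ⟨0, hm, by omega⟩


end NPartition

section FinsetAux

/-- In a finset of naturals, if `a < b` and `b ∈ s` then strictly more elements
exceed `a` than exceed `b`. -/
lemma filter_gt_card_lt {s : Finset ℕ} {a b : ℕ} (hb : b ∈ s) (hab : a < b) :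
    (s.filter (b < ·)).card < (s.filter (a < ·)).card := by
  have hsub : insert b (s.filter (b < ·)) ⊆ s.filter (a < ·) := by
    intro x hx
    rcases Finset.mem_insert.1 hx with rfl | hx
    · exact Finset.mem_filter.2 ⟨hb, hab⟩
    · rcases Finset.mem_filter.1 hx with ⟨h1, h2⟩
      exact Finset.mem_filter.2 ⟨h1, hab.trans h2⟩
  calc (s.filter (b < ·)).card
      < (insert b (s.filter (b < ·))).card := by
        rw [Finset.card_insert_of_notMem (by simp)]
        omega
    _ ≤ _ := Finset.card_le_card hsub

/-- Two strictly decreasing sequences with the same image on `range m`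
agree on `range m`. -/
lemma strictAnti_image_eq {f g : ℕ → ℕ} {m : ℕ}
    (hf : ∀ ⦃i j : ℕ⦄, i < j → j < m → f j < f i)
    (hg : ∀ ⦃i j : ℕ⦄, i < j → j < m → g j < g i)
    (h : (Finset.range m).image f = (Finset.range m).image g) :
    ∀ i < m, f i = g i := by
  intro i hi
  have key : ∀ (F : ℕ → ℕ), (∀ ⦃a b : ℕ⦄, a < b → b < m → F b < F a) →
      (((Finset.range m).image F).filter (F i < ·)).card = i := by
    intro F hF
    have himg : ((Finset.range m).image F).filter (F i < ·)
        = (Finset.range i).image F := by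
      ext x
      simp only [Finset.mem_filter, Finset.mem_image, Finset.mem_range]
      constructor
      · rintro ⟨⟨k, hk, rfl⟩, hlt⟩
        refine ⟨k, ?_, rfl⟩
        rcases lt_trichotomy k i with h' | rfl | h'
        · exact h'
        · exact absurd hlt (lt_irrefl _)
        · exact absurd (hF h' hk) (not_lt.2 hlt.le)
      · rintro ⟨k, hk, rfl⟩
        exact ⟨⟨k, hk.trans hi, rfl⟩, hF hk hi⟩
    rw [himg, Finset.card_image_of_injOn, Finset.card_range]
    intro a ha b hb hab
    simp only [Finset.coe_range, Set.mem_Iio] at ha hb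
    by_contra hne
    rcases lt_or_gt_of_ne hne with h' | h'
    · exact absurd hab (hF h' (hb.trans hi)).ne'
    · exact absurd hab (hF h' (ha.trans hi)).ne
  have c1 : (((Finset.range m).image f).filter (f i < ·)).card = i := key f hf
  have c2 : (((Finset.range m).image f).filter (g i < ·)).card = i := by
    rw [h]; exact key g hg
  have hfi : f i ∈ (Finset.range m).image f :=
    Finset.mem_image_of_mem f (Finset.mem_range.2 hi)
  have hgi : g i ∈ (Finset.range m).image f := by
    rw [h]; exact Finset.mem_image_of_mem g (Finset.mem_range.2 hi)
  by_contra hne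
  rcases lt_or_gt_of_ne hne with h' | h'
  · have := filter_gt_card_lt hgi h'
    omega
  · have := filter_gt_card_lt hfi h'
    omega

end FinsetAux


/-- Let `X` be the minimal bead-set of a nonempty partition `λ` and
`x' = max X`.  Then `λ` is self-conjugate iff for every `0 ≤ y ≤ x'`, `y ∈ X` exactly
when `x' - y ∉ X`. -/
theorem selfConjugate_iff_beadset_reflection (lam : NPartition) (hlam : lam.parts 0 ≠ 0)
    (X : Finset ℕ) (hX : X = lam.minBeadSet) (x' : ℕ) (hx' : x' = X.sup id) :
    lam = lam.conj ↔ ∀ y : ℕ, y ≤ x' → (y ∈ X ↔ x' - y ∉ X) := by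
  subst hX
  have hm : 0 < lam.numParts := by
    by_contra h
    push_neg at h
    exact hlam (lam.parts_eq_zero_of_numParts_le (by omega))
  have hx'v : x' = lam.parts 0 + (lam.numParts - 1) := by
    rw [hx', lam.sup_minBeadSet hlam]
  clear hx'
  set σ : ℕ → ℕ := fun j => j + (lam.numParts - lam.conj.parts j) with hσ
  set S : Finset ℕ := (Finset.range (lam.parts 0)).image σ with hS
  have hc_le : ∀ j, lam.conj.parts j ≤ lam.numParts := lam.conj_parts_le
  have hσmono : ∀ ⦃j j' : ℕ⦄, j < j' → σ j < σ j' := by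
    intro j j' hjj
    have h1 := lam.conj.antitone hjj.le
    have h2 := hc_le j
    have h3 := hc_le j'
    simp only [hσ]
    omega
  have hcardS : S.card = lam.parts 0 := by
    rw [hS, Finset.card_image_of_injOn, Finset.card_range]
    intro a _ b _ hab
    by_contra hne
    rcases lt_or_gt_of_ne hne with h' | h'
    · exact absurd hab (hσmono h').ne
    · exact absurd hab (hσmono h').ne'
  have hdisj : ∀ i < lam.numParts, ∀ j < lam.parts 0,
      lam.parts i + (lam.numParts - (i + 1)) ≠ σ j := by
    intro i hi j hj heq
    have h2 := hc_le j
    have hsum : lam.parts i + lam.conj.parts j = j + i + 1 := by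
      simp only [hσ] at heq; omega
    by_cases hcase : j < lam.parts i
    · have := lam.lt_conj_parts_iff.2 hcase
      omega
    · push_neg at hcase
      have hle : lam.conj.parts j ≤ i := by
        by_contra h
        push_neg at h
        exact absurd (lam.lt_conj_parts_iff.1 h) (by omega)
      omega
  have hDisjXS : Disjoint lam.minBeadSet S := by
    rw [Finset.disjoint_left]
    intro a ha haS
    rw [lam.minBeadSet_eq_image] at ha
    rw [hS] at haS
    simp only [Finset.mem_image, Finset.mem_range] at ha haS
    obtain ⟨i, hi, rfl⟩ := ha
    obtain ⟨j, hj, hji⟩ := haS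
    exact hdisj i hi j hj hji.symm
  have hsubX : lam.minBeadSet ⊆ Finset.range (x' + 1) := by
    intro a ha
    rw [lam.minBeadSet_eq_image] at ha
    simp only [Finset.mem_image, Finset.mem_range] at ha ⊢
    obtain ⟨i, hi, rfl⟩ := ha
    have := lam.antitone (Nat.zero_le i)
    omega
  have hsubS : S ⊆ Finset.range (x' + 1) := by
    intro a ha
    rw [hS] at ha
    simp only [Finset.mem_image, Finset.mem_range] at ha ⊢
    obtain ⟨j, hj, rfl⟩ := ha
    have := lam.conj_parts_pos hj
    simp only [hσ]
    omega
  have hunion : lam.minBeadSet ∪ S = Finset.range (x' + 1) := by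
    apply Finset.eq_of_subset_of_card_le (Finset.union_subset hsubX hsubS)
    rw [Finset.card_range, Finset.card_union_of_disjoint hDisjXS,
      lam.card_minBeadSet, hcardS]
    omega
  have hspacer : ∀ y ≤ x', (y ∉ lam.minBeadSet ↔ y ∈ S) := by
    intro y hy
    have hyr : y ∈ lam.minBeadSet ∪ S := by
      rw [hunion]
      simp only [Finset.mem_range]
      omega
    constructor
    · intro hnX
      rcases Finset.mem_union.1 hyr with h | h
      · exact absurd h hnX
      · exact h
    · intro hyS hyX
      exact Finset.disjoint_left.1 hDisjXS hyX hyS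
  have hrefl : ∀ j < lam.parts 0,
      x' - σ j = lam.conj.parts j + (lam.parts 0 - (j + 1)) ∧ σ j ≤ x' := by
    intro j hj
    have h1 := hc_le j
    have h2 := lam.conj_parts_pos hj
    simp only [hσ]
    omega
  have hconjimg : lam.conj.minBeadSet
      = (Finset.range (lam.parts 0)).image
        (fun j => lam.conj.parts j + (lam.parts 0 - (j + 1))) := by
    rw [lam.conj.minBeadSet_eq_image, lam.conj_numParts hlam]
  have hkey : ∀ y ≤ x', (y ∈ lam.conj.minBeadSet ↔ x' - y ∈ S) := by
    intro y hy
    rw [hconjimg]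
    constructor
    · intro h
      simp only [Finset.mem_image, Finset.mem_range] at h
      obtain ⟨j, hj, rfl⟩ := h
      obtain ⟨he, hle⟩ := hrefl j hj
      have hxy : x' - (lam.conj.parts j + (lam.parts 0 - (j + 1))) = σ j := by omega
      rw [hxy, hS]
      exact Finset.mem_image_of_mem σ (Finset.mem_range.2 hj)
    · intro h
      rw [hS] at h
      simp only [Finset.mem_image, Finset.mem_range] at h
      obtain ⟨j, hj, hji⟩ := h
      obtain ⟨he, hle⟩ := hrefl j hj
      have hy' : y = lam.conj.parts j + (lam.parts 0 - (j + 1)) := by omega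
      rw [hy']
      simp only [Finset.mem_image, Finset.mem_range]
      exact ⟨j, hj, rfl⟩
  constructor
  · intro h y hy
    have e2 : lam.minBeadSet = lam.conj.minBeadSet := by rw [← h]
    rw [e2, hkey y hy]
    have e1 := hspacer (x' - y) (by omega)
    rw [e2] at e1
    tauto
  · intro hC
    have hXc : lam.minBeadSet = lam.conj.minBeadSet := by
      ext n
      by_cases hn : n ≤ x'
      · have e1 := hC n hn
        have e2 := hspacer (x' - n) (by omega)
        have e3 := hkey n hn
        tauto
      · constructor
        · intro h
          exact absurd (Finset.mem_range.1 (hsubX h)) (by omega)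
        · intro h
          rw [hconjimg] at h
          simp only [Finset.mem_image, Finset.mem_range] at h
          obtain ⟨j, hj, rfl⟩ := h
          have := hc_le j
          omega
    have hm' : lam.numParts = lam.parts 0 := by
      have hcards := lam.card_minBeadSet
      rw [hXc, lam.conj.card_minBeadSet, lam.conj_numParts hlam] at hcards
      exact hcards.symm
    apply NPartition.ext_parts
    funext i
    by_cases him : i < lam.numParts
    · have himg : (Finset.range lam.numParts).image
          (fun i => lam.parts i + (lam.numParts - (i + 1)))
          = (Finset.range lam.numParts).image
            (fun j => lam.conj.parts j + (lam.numParts - (j + 1))) := by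
        rw [← lam.minBeadSet_eq_image, hXc, hconjimg, ← hm']
      have hg : ∀ ⦃a b : ℕ⦄, a < b → b < lam.numParts →
          lam.conj.parts b + (lam.numParts - (b + 1))
            < lam.conj.parts a + (lam.numParts - (a + 1)) := by
        intro a b hab hb
        have := lam.conj.antitone hab.le
        omega
      have heq := strictAnti_image_eq lam.beta_strictAnti hg himg i him
      omega
    · push_neg at him
      rw [lam.parts_eq_zero_of_numParts_le him,
        lam.conj_parts_eq_zero (by omega)]
end

section
/- Let s = 2k > 2 be even. For all integers i, j with 0 ≤ i ≤ s−1 and 0 ≤ j ≤ s−3, the following are equivalent: (1) i + js ∈ P_{s−1,s+1}; (2) i + (s−3−j)s ∉ P_{s−1,s+1}; (3) (s−1−i) + js ∈ P_{s−1,s+1}. -/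
theorem rep_iff_aux (s k : ℕ) (hs : s = 2 * k) (hs2 : 2 < s) (i j : ℕ)
    (hi : i ≤ s - 1) (hj : j ≤ s - 3) :
    (∃ a b : ℕ, i + j * s = a * (s - 1) + b * (s + 1)) ↔
    ((i ≤ j ∧ (i + j) % 2 = 0) ∨ (s - 1 ≤ i + j ∧ (i + j) % 2 = 1)) := by
  have h1s : 1 ≤ s := by omega
  have hiz : (i : ℤ) ≤ (s : ℤ) - 1 := by omega
  have hjz : (j : ℤ) ≤ (s : ℤ) - 3 := by omega
  have hsz : (4 : ℤ) ≤ (s : ℤ) := by omega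
  constructor
  · rintro ⟨a, b, h⟩
    zify [h1s] at h
    have key : (i : ℤ) + j * s = (a + b) * s + ((b : ℤ) - a) := by linear_combination h
    have hm2 : (a : ℤ) + b ≤ (j : ℤ) + 1 := by
      by_contra h'
      push_neg at h'
      have e1 : ((j : ℤ) + 2) * ((s : ℤ) - 1) ≤ ((a : ℤ) + b) * ((s : ℤ) - 1) := by
        apply mul_le_mul_of_nonneg_right (by omega) (by omega)
      nlinarith [key, e1, hiz, hjz, hsz]
    have hm1 : (j : ℤ) ≤ (a : ℤ) + b := by
      by_contra h'
      push_neg at h'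
      have e2 : ((a : ℤ) + b) * ((s : ℤ) + 1) ≤ ((j : ℤ) - 1) * ((s : ℤ) + 1) := by
        apply mul_le_mul_of_nonneg_right (by omega) (by omega)
      nlinarith [key, e2, hiz, hjz, hsz]
    have hcase : a + b = j ∨ a + b = j + 1 := by omega
    rcases hcase with hab | hab
    · have e : ((a : ℤ) + b) = j := by exact_mod_cast hab
      have e2 : ((a : ℤ) + b) * s = (j : ℤ) * s := by rw [e]
      have hi2 : (i : ℤ) = (b : ℤ) - a := by linarith [key, e2]
      omega
    · have e : ((a : ℤ) + b) = (j : ℤ) + 1 := by exact_mod_cast hab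
      have e2 : ((a : ℤ) + b) * s = ((j : ℤ) + 1) * s := by rw [e]
      have e3 : ((j : ℤ) + 1) * s = (j : ℤ) * s + s := by ring
      have hi2 : (i : ℤ) = (s : ℤ) + b - a := by linarith [key, e2, e3]
      omega
  · rintro (⟨hij, hpar⟩ | ⟨hge, hpar⟩)
    · obtain ⟨A, B, h1, h2⟩ : ∃ A B : ℕ, j = A + B ∧ B = A + i :=
        ⟨(j - i) / 2, (i + j) / 2, by omega, by omega⟩
      refine ⟨A, B, ?_⟩
      zify [h1s]
      have h1' : (j : ℤ) = (A : ℤ) + B := by exact_mod_cast h1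
      have h2' : (B : ℤ) = (A : ℤ) + i := by exact_mod_cast h2
      linear_combination (s : ℤ) * h1' - h2'
    · obtain ⟨A, B, h1, h2⟩ : ∃ A B : ℕ, A + i = B + s ∧ A + B = j + 1 :=
        ⟨(i + j + 1 - s) / 2 + (s - i), (i + j + 1 - s) / 2, by omega, by omega⟩
      refine ⟨A, B, ?_⟩
      zify [h1s]
      have h1' : (A : ℤ) + i = (B : ℤ) + s := by exact_mod_cast h1
      have h2' : (A : ℤ) + B = (j : ℤ) + 1 := by exact_mod_cast h2
      linear_combination h1' - (s : ℤ) * h2'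

theorem mem_iff_aux (s k : ℕ) (hs : s = 2 * k) (hs2 : 2 < s) (i j : ℕ)
    (hi : i ≤ s - 1) (hj : j ≤ s - 3) :
    (i + j * s ∈ Pst (s - 1) (s + 1)) ↔
    (((i + j) % 2 = 0 ∧ j < i) ∨ ((i + j) % 2 = 1 ∧ i + j + 1 < s)) := by
  have hmul : j * s = 0 ∨ s ≤ j * s := by
    rcases Nat.eq_zero_or_pos j with h | h
    · left; simp [h]
    · right; exact Nat.le_mul_of_pos_left s h
  have hj0 : j * s = 0 → j = 0 := by
    intro h; rcases Nat.mul_eq_zero.mp h with h | h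
    · exact h
    · omega
  rw [show (i + j * s ∈ Pst (s - 1) (s + 1)) ↔
      (0 < i + j * s ∧ ¬ ∃ a b : ℕ, i + j * s = a * (s - 1) + b * (s + 1)) from Iff.rfl]
  rw [rep_iff_aux s k hs hs2 i j hi hj]
  omega

set_option maxHeartbeats 1000000 in
/-- Let `s = 2k > 2` be even.  For `0 ≤ i ≤ s-1` and `0 ≤ j ≤ s-3`, TFAE:
(1) `i + js ∈ P_{s-1,s+1}`; (2) `i + (s-3-j)s ∉ P_{s-1,s+1}`;
(3) `(s-1-i) + js ∈ P_{s-1,s+1}`. -/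
theorem horizontal_and_vertical_symmetry_of_P (s k : ℕ) (hs : s = 2 * k) (hs2 : 2 < s) :
    ∀ i j : ℕ, i ≤ s - 1 → j ≤ s - 3 →
      ((i + j * s ∈ Pst (s - 1) (s + 1) ↔ i + (s - 3 - j) * s ∉ Pst (s - 1) (s + 1)) ∧
       (i + j * s ∈ Pst (s - 1) (s + 1) ↔ (s - 1 - i) + j * s ∈ Pst (s - 1) (s + 1))) := by
  intro i j hi hj
  have m1 := mem_iff_aux s k hs hs2 i j hi hj
  have m2 := mem_iff_aux s k hs hs2 i (s - 3 - j) hi (by omega)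
  have m3 := mem_iff_aux s k hs hs2 (s - 1 - i) j (by omega) hj
  rw [m1, m2, m3]
  omega
end

section
/- Let s and t be coprime integers greater than 1. Then exactly half of the integers in {1, 2, …, (s−1)(t−1)} belong to P_{s,t}; that is, |P_{s,t} ∩ {1,…,(s−1)(t−1)}| = (s−1)(t−1)/2. -/
/-!
Write `F = st - s - t`, so that `(s - 1)(t - 1) = F + 1`. For coprime `s, t`, exactly one of `n`
and `F - n` is a nonnegative combination of `s` and `t`. Not both, since otherwise
`st = As + Bt` with `A, B ≥ 1`, which forces `s ∣ B` and `t ∣ A`; and at least one, since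
writing `n = as + bt` with `0 ≤ a < t`, either `b ≥ 0` or `F - n = (t - 1 - a)s + (-b - 1)t`.
So `n ↦ F - n` swaps the representable and the non-representable numbers in `{0, …, F}`, and
half of them are non-representable. As `0` and `F + 1` are representable, the same count holds
on `{1, …, F + 1}`.
-/

open Finset

theorem mul_ne_mul_add_mul_of_coprime {s t : ℕ} (hco : Nat.Coprime s t) (ht : 0 < t) {A B : ℕ}
    (hA : 0 < A) (hB : 0 < B) : s * t ≠ A * s + B * t := by
  intro h
  have hsB : s ≤ B := Nat.le_of_dvd hB <| hco.dvd_of_dvd_mul_right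
    ((Nat.dvd_add_right (dvd_mul_left s A)).mp (h ▸ dvd_mul_right s t))
  have htA : t ≤ A := Nat.le_of_dvd hA <| hco.symm.dvd_of_dvd_mul_right
    ((Nat.dvd_add_left (dvd_mul_left t B)).mp (h ▸ dvd_mul_left t s))
  nlinarith

/-- Taken over `ℤ` so that the symmetry `n ↦ s * t - s - t - n` stays inside the domain. -/
def IsRepresentable (s t : ℕ) (n : ℤ) : Prop := ∃ a b : ℕ, n = a * s + b * t

namespace IsRepresentable

variable {s t : ℕ}

theorem natCast_iff {n : ℕ} : IsRepresentable s t n ↔ ∃ a b : ℕ, n = a * s + b * t := by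
  simp only [IsRepresentable]
  norm_cast

theorem zero : IsRepresentable s t 0 := ⟨0, 0, by simp⟩

theorem nonneg {n : ℤ} (h : IsRepresentable s t n) : 0 ≤ n := by
  obtain ⟨a, b, rfl⟩ := h
  positivity

theorem add_ne_frobenius (hco : Nat.Coprime s t) (ht : 0 < t) {m n : ℤ}
    (hm : IsRepresentable s t m) (hn : IsRepresentable s t n) : m + n ≠ s * t - s - t := by
  obtain ⟨a, b, rfl⟩ := hm
  obtain ⟨c, d, rfl⟩ := hn
  intro h
  refine mul_ne_mul_add_mul_of_coprime hco ht (A := a + c + 1) (B := b + d + 1) (by omega)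
    (by omega) ?_
  exact_mod_cast (by linear_combination -h : (s * t : ℤ) = (a + c + 1) * s + (b + d + 1) * t)

theorem or_frobenius_sub (hco : Nat.Coprime s t) (ht : 0 < t) (n : ℤ) :
    IsRepresentable s t n ∨ IsRepresentable s t (s * t - s - t - n) := by
  obtain ⟨u, v, huv⟩ := Nat.isCoprime_iff_coprime.mpr hco
  have htZ : (0 : ℤ) < t := by exact_mod_cast ht
  obtain ⟨a, ha0, hat, b, hn⟩ : ∃ a : ℤ, 0 ≤ a ∧ a < t ∧ ∃ b : ℤ, n = a * s + b * t :=
    ⟨u * n % t, Int.emod_nonneg _ htZ.ne', Int.emod_lt_of_pos _ htZ, u * n / t * s + v * n, by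
      linear_combination (-n) * huv - s * Int.emod_add_mul_ediv (u * n) t⟩
  lift a to ℕ using ha0
  rcases le_or_gt 0 b with hb | hb
  · lift b to ℕ using hb
    exact .inl ⟨a, b, hn⟩
  · right
    refine ⟨(t - 1 - a : ℤ).toNat, (-b - 1).toNat, ?_⟩
    rw [Int.toNat_of_nonneg (by omega), Int.toNat_of_nonneg (by omega), hn]
    ring

theorem iff_not_frobenius_sub (hco : Nat.Coprime s t) (ht : 0 < t) (n : ℤ) :
    IsRepresentable s t n ↔ ¬ IsRepresentable s t (s * t - s - t - n) :=
  ⟨fun hn h => add_ne_frobenius hco ht hn h (by ring), (or_frobenius_sub hco ht n).resolve_right⟩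

end IsRepresentable

theorem card_filter_range_eq_half {p : ℕ → Prop} [DecidablePred p] {N : ℕ}
    (h : ∀ n < N, p n ↔ ¬ p (N - 1 - n)) : #{n ∈ range N | p n} = N / 2 := by
  have hcard : #{n ∈ range N | p n} = #{n ∈ range N | ¬ p n} := by
    refine card_bij' (fun n _ => N - 1 - n) (fun n _ => N - 1 - n) ?_ ?_ ?_ ?_
    all_goals intro n hn; simp only [mem_filter, mem_range] at hn ⊢
    · refine ⟨by omega, ?_⟩
      rw [h (N - 1 - n) (by omega), Nat.sub_sub_self (by omega)]
      exact not_not.mpr hn.2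
    · exact ⟨by omega, (h n hn.1).not_left.mp hn.2⟩
    all_goals omega
  have := card_filter_add_card_filter_not (s := range N) (fun n => p n)
  rw [← hcard, card_range] at this
  omega

/-- Let `s, t` be coprime integers greater than 1.  Then exactly half of
the integers in `{1, …, (s-1)(t-1)}` belong to `P_{s,t}`. -/
theorem half_of_interval_in_P (s t : ℕ) (hs : 1 < s) (ht : 1 < t)
    (hco : Nat.Coprime s t) :
    (Pst s t ∩ Set.Icc 1 ((s - 1) * (t - 1))).ncard = (s - 1) * (t - 1) / 2 := by
  classical
  set N := (s - 1) * (t - 1)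
  have hNZ : (N : ℤ) = s * t - s - t + 1 := by
    push_cast [N, Nat.cast_sub hs.le, Nat.cast_sub ht.le]
    ring
  have hsym : ∀ n < N, IsRepresentable s t n ↔ ¬ IsRepresentable s t (N - 1 - n : ℕ) := by
    intro n hn
    rw [IsRepresentable.iff_not_frobenius_sub hco (by omega), Nat.cast_sub (by omega),
      Nat.cast_sub (by omega), hNZ]
    ring_nf
  -- `N` is representable because `s * t - s - t - N = -1` is not
  have hN : IsRepresentable s t N := by
    rw [IsRepresentable.iff_not_frobenius_sub hco (by omega), hNZ]
    exact fun h => absurd h.nonneg (by norm_num)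
  have hset : Pst s t ∩ Set.Icc 1 N =
      ↑({n ∈ range N | ¬ IsRepresentable s t n} : Finset ℕ) := by
    ext n
    simp only [Pst, Set.mem_inter_iff, Set.mem_Icc, coe_filter, mem_range,
      ← IsRepresentable.natCast_iff]
    constructor
    · rintro ⟨⟨-, hn⟩, -, hle⟩
      exact ⟨lt_of_le_of_ne hle (by rintro rfl; exact hn hN), hn⟩
    · rintro ⟨hlt, hn⟩
      have hpos : 0 < n := Nat.pos_of_ne_zero (by rintro rfl; exact hn IsRepresentable.zero)
      exact ⟨⟨hpos, hn⟩, hpos, hlt.le⟩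
  rw [hset, Set.ncard_coe_finset]
  exact card_filter_range_eq_half fun n hn => not_congr (hsym n hn)
end
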